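/- arXiv:2503.18003 — 4 statements merged into one kernel-verified Lean document; each statement's English description precedes it below -/
import Mathlib

section
/- Let D be a structure with vertex set V, let ψ be a structure (query) containing two distinguished elements x, x' with no relational atoms between them added, and consider blowup(D,2). For every homomorphism h: ψ → blowup(D,2) with h(x) = h(x') = (s,ε), the map that redefines h(x') := (s, 3−ε) and keeps all other values is again a homomorphism into blowup(D,2), and the assignment h ↦ F(h) is injective. -/
/-- A relational signature: a type of relation symbols with arities. -/
structure Sig where
  symb : Type
  ar : symb → ℕ

/-- A finite relational structure over a signature. -/
structure Str (σ : Sig) where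
  V : Type
  [fin : Fintype V]
  rel : ∀ s : σ.symb, Set (Fin (σ.ar s) → V)

attribute [instance] Str.fin

/-- `f` is a homomorphism of relational structures from `A` to `B`. -/
def IsHom {σ : Sig} (A B : Str σ) (f : A.V → B.V) : Prop :=
  ∀ (s : σ.symb) (t : Fin (σ.ar s) → A.V), t ∈ A.rel s → (f ∘ t) ∈ B.rel s

/-- The number of homomorphisms from `A` to `B` (bag semantics: `A(B) = |Hom(A,B)|`). -/
noncomputable def homCount {σ : Sig} (A B : Str σ) : ℕ :=
  Nat.card {f : A.V → B.V // IsHom A B f}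


/-- The `k`-fold blow-up of a structure `D`. -/
def blowup {σ : Sig} (D : Str σ) (k : ℕ) : Str σ where
  V := D.V × Fin k
  rel := fun s => {t | (fun i => (t i).1) ∈ D.rel s}

/- The blow-up only duplicates vertices, so membership of a tuple in a relation of `blowup D k`
depends only on the first coordinates; moving `h x'` to the other copy of the same vertex thus
preserves homomorphisms. Injectivity holds because `h x'` can be recovered as `h x`, which the
update leaves untouched. -/

theorem isHom_blowup_iff {σ : Sig} {A D : Str σ} {k : ℕ} {f : A.V → (blowup D k).V} :
    IsHom A (blowup D k) f ↔ IsHom A D (Prod.fst ∘ f) :=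
  Iff.rfl

theorem IsHom.blowup_of_fst_eq {σ : Sig} {A D : Str σ} {k : ℕ} {f g : A.V → (blowup D k).V}
    (hf : IsHom A (blowup D k) f) (hfg : Prod.fst ∘ g = Prod.fst ∘ f) :
    IsHom A (blowup D k) g := by
  rw [isHom_blowup_iff, hfg]
  exact isHom_blowup_iff.mp hf

theorem Function.fst_comp_update_of_fst_eq {α β γ : Type*} [DecidableEq α] (f : α → β × γ)
    (a : α) {p : β × γ} (hp : p.1 = (f a).1) : Prod.fst ∘ Function.update f a p = Prod.fst ∘ f := by
  funext v
  rcases eq_or_ne v a with rfl | hv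
  · simpa using hp
  · simp [Function.update_of_ne hv]

theorem Set.injOn_update_of_eq {α β : Type*} [DecidableEq α] {a b : α} (hab : b ≠ a)
    (g : (α → β) → β) :
    Set.InjOn (fun f : α → β => Function.update f a (g f)) {f | f b = f a} := by
  intro f₁ hf₁ f₂ hf₂ heq
  have off_a : ∀ v, v ≠ a → f₁ v = f₂ v := fun v hv => by
    simpa [Function.update_of_ne hv] using congrFun heq v
  funext v
  rcases eq_or_ne v a with rfl | hv
  · calc f₁ v = f₁ b := hf₁.symm
      _ = f₂ b := off_a b hab
      _ = f₂ v := hf₂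
  · exact off_a v hv

/-- For every homomorphism `h : ψ → blowup(D,2)` with `h x = h x' = (s,ε)`, the map
`F(h)` redefining `h(x')` to the other copy `(s, ε+1)` of `s` (and keeping all other
values) is again a homomorphism into `blowup(D,2)`, and `h ↦ F(h)` is injective on
the set of such homomorphisms. -/
theorem stmt9 {σ : Sig} (ψ D : Str σ) [DecidableEq ψ.V] (x x' : ψ.V) (hxx : x ≠ x') :
    (∀ h : ψ.V → (blowup D 2).V, IsHom ψ (blowup D 2) h → h x = h x' →
      IsHom ψ (blowup D 2) (Function.update h x' ((h x').1, (h x').2 + 1))) ∧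
    Set.InjOn (fun h : ψ.V → (blowup D 2).V =>
        Function.update h x' ((h x').1, (h x').2 + 1))
      {h : ψ.V → (blowup D 2).V | IsHom ψ (blowup D 2) h ∧ h x = h x'} := by
  refine ⟨fun h hh _ => hh.blowup_of_fst_eq (Function.fst_comp_update_of_fst_eq h x' rfl), ?_⟩
  exact (Set.injOn_update_of_eq hxx _).mono fun _ hh => hh.2
end

section
/- Let ψ_s be a conjunctive query with one inequality and let ψ'_s be ψ_s without the inequality; let ψ_b be a conjunctive query without inequalities. Then the following are equivalent: (a) there exists a finite structure D with ψ_s(D) > ψ_b(D); (b) there exists a finite structure D_0 with ψ'_s(D_0) > ψ_b(D_0). -/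
/-- The `k`-fold power of a structure. -/
def Str.pw {σ : Sig} (D : Str σ) (k : ℕ) : Str σ where
  V := Fin k → D.V
  rel s := {t | ∀ i, (fun j => t j i) ∈ D.rel s}

/-- The 2-fold blowup of a structure. -/
def Str.blow {σ : Sig} (D : Str σ) : Str σ where
  V := D.V × Bool
  rel s := {t | (Prod.fst ∘ t) ∈ D.rel s}

lemma homCount_pw {σ : Sig} (A D : Str σ) (k : ℕ) :
    homCount A (D.pw k) = homCount A D ^ k := by
  have e : {f : A.V → (D.pw k).V // IsHom A (D.pw k) f} ≃
      (Fin k → {f : A.V → D.V // IsHom A D f}) :=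
    { toFun := fun f i => ⟨fun v => f.1 v i, fun s t ht => f.2 s t ht i⟩
      invFun := fun g => ⟨fun v i => (g i).1 v, fun s t ht i => (g i).2 s t ht⟩
      left_inv := fun f => rfl
      right_inv := fun g => rfl }
  rw [homCount, Nat.card_congr e, Nat.card_fun]
  simp [homCount]

lemma homCount_blow_le {σ : Sig} (A E : Str σ) :
    homCount A E.blow ≤ 2 ^ (Nat.card A.V) * homCount A E := by
  have hcard : Nat.card ((A.V → Bool) × {f : A.V → E.V // IsHom A E f}) =
      2 ^ (Nat.card A.V) * homCount A E := by
    rw [Nat.card_prod, Nat.card_fun, homCount]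
    simp
  rw [← hcard, homCount]
  apply Nat.card_le_card_of_injective
    (fun f => (fun v => (f.1 v).2,
      ⟨fun v => (f.1 v).1, fun s t ht => f.2 s t ht⟩))
  intro a b hab
  apply Subtype.ext
  funext v
  have h1 := congrFun (congrArg Prod.fst hab) v
  have h2 := congrFun (congrArg Subtype.val (congrArg Prod.snd hab)) v
  exact Prod.ext h2 h1

lemma card_s_ge {σ : Sig} (ψ' : Str σ) (x x' : ψ'.V) (hxx : x ≠ x') (E : Str σ) :
    homCount ψ' E ≤
      Nat.card {h : ψ'.V → E.blow.V // IsHom ψ' E.blow h ∧ h x ≠ h x'} := by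
  classical
  rw [homCount]
  apply Nat.card_le_card_of_injective
    (fun f => ⟨fun v => (f.1 v, if v = x then true else false),
      ⟨fun s t ht => f.2 s t ht, by
        intro h
        have := congrArg Prod.snd h
        simp [hxx, Ne.symm hxx] at this⟩⟩)
  intro a b hab
  apply Subtype.ext
  funext v
  exact congrArg Prod.fst (congrFun (congrArg Subtype.val hab) v)

lemma key_pow (b a j : ℕ) (h : b < a) : ∃ k, 2 ^ j * b ^ k < a ^ k := by
  rcases Nat.eq_zero_or_pos b with hb | hb
  · exact ⟨1, by simp [hb]; omega⟩
  · have hb' : (0 : ℚ) < b := by exact_mod_cast hb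
    have ha : (1 : ℚ) < (a : ℚ) / b := by
      rw [lt_div_iff₀ hb']
      exact_mod_cast by omega
    obtain ⟨k, hk⟩ := pow_unbounded_of_one_lt ((2 : ℚ) ^ j) ha
    refine ⟨k, ?_⟩
    have : (2 : ℚ) ^ j * (b : ℚ) ^ k < (a : ℚ) ^ k := by
      rw [div_pow] at hk
      calc (2 : ℚ) ^ j * (b : ℚ) ^ k < ((a : ℚ) ^ k / (b : ℚ) ^ k) * (b : ℚ) ^ k := by
            apply mul_lt_mul_of_pos_right hk (by positivity)
        _ = (a : ℚ) ^ k := by field_simp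
    exact_mod_cast this

/-- Let `ψ_s` be a conjunctive query with one inequality `x ≠ x'`, `ψ'` its canonical
structure with the inequality removed, and `ψb` a query without inequalities.  Then
there exists a finite structure `D` with `ψ_s(D) > ψb(D)` (counting homomorphisms of
`ψ'` that map `x`, `x'` to distinct vertices) iff there exists a finite structure
`D₀` with `ψ'(D₀) > ψb(D₀)`. -/
theorem stmt11 {σ : Sig} (ψ' ψb : Str σ) (x x' : ψ'.V) (hxx : x ≠ x') :
    (∃ D : Str σ,
        homCount ψb D < Nat.card {h : ψ'.V → D.V // IsHom ψ' D h ∧ h x ≠ h x'}) ↔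
    (∃ D₀ : Str σ, homCount ψb D₀ < homCount ψ' D₀) := by
  constructor
  · rintro ⟨D, hD⟩
    refine ⟨D, lt_of_lt_of_le hD ?_⟩
    rw [homCount]
    apply Nat.card_le_card_of_injective (fun h => ⟨h.1, h.2.1⟩)
    intro a b hab
    have h2 := congrArg Subtype.val hab
    exact Subtype.ext h2
  · rintro ⟨D₀, hD⟩
    obtain ⟨k, hk⟩ := key_pow (homCount ψb D₀) (homCount ψ' D₀) (Nat.card ψb.V) hD
    refine ⟨(D₀.pw k).blow, ?_⟩
    calc homCount ψb (D₀.pw k).blow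
        ≤ 2 ^ Nat.card ψb.V * homCount ψb (D₀.pw k) := homCount_blow_le _ _
      _ = 2 ^ Nat.card ψb.V * homCount ψb D₀ ^ k := by rw [homCount_pw]
      _ < homCount ψ' D₀ ^ k := hk
      _ = homCount ψ' (D₀.pw k) := (homCount_pw _ _ _).symm
      _ ≤ _ := card_s_ge ψ' x x' hxx (D₀.pw k)
end

section
/- Let P_1, P_2 be polynomials over ℕ in ξ_2,...,ξ_n, let P_1'', P_2'' be their homogenizations to common degree d via the new variable ξ_1 (each monomial t_i of degree d_i multiplied by ξ_1^{d−d_i}, d > all d_i), and let c be a natural number ≥ every coefficient of P_1. Set P_s = P_1'' and P_b = c·P_2''. Then the following are equivalent: (a) there exists a valuation Ξ: {ξ_2,...,ξ_n}→ℕ with P_1(Ξ) > P_2(Ξ); (b) there exists a valuation Ξ': {ξ_1,...,ξ_n}→ℕ with c·P_s(Ξ') > Ξ'(ξ_1)^d · P_b(Ξ'). -/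
/-!
Setting `ξ_1 = 1` turns the homogenization `P''` back into `P`, which gives (a) ⇒ (b) as soon as
`c > 0`, and `c > 0` holds because `P₁ ≠ 0`. Conversely, comparing term by term,
`P''(a, Ξ) ≤ a^d·P(Ξ)` when every monomial of `P` has degree `< d` (this covers `a = 0`), and
`a^d·P(Ξ) ≤ a^d·P''(a, Ξ)` always; so `P₁ ≤ P₂` everywhere yields
`c·P₁''(a, Ξ) ≤ c·a^d·P₁(Ξ) ≤ c·a^d·P₂(Ξ) ≤ a^d·(c·P₂''(a, Ξ))`.
-/

open MvPolynomial

/-- The homogenization of a polynomial `P` in variables `ξ_2, …, ξ_{n+1}` (indexed by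
`Fin n`) to degree `d` via a fresh variable `ξ_1` (index `0` in `Fin (n+1)`): every
monomial `t_i` of degree `d_i` is multiplied by `ξ_1 ^ (d - d_i)`. -/
noncomputable def homog (n d : ℕ) (P : MvPolynomial (Fin n) ℕ) :
    MvPolynomial (Fin (n + 1)) ℕ :=
  ∑ m ∈ P.support,
    (X 0) ^ (d - m.sum fun _ e => e) *
      monomial (m.mapDomain Fin.succ) (P.coeff m)

theorem pos_of_coeff_le {σ : Type*} {P : MvPolynomial σ ℕ} {c : ℕ} (hP : P ≠ 0)
    (hc : ∀ m ∈ P.support, P.coeff m ≤ c) : 0 < c := by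
  obtain ⟨m, hm⟩ := ne_zero_iff.mp hP
  exact (Nat.pos_of_ne_zero hm).trans_le (hc m (mem_support_iff.mpr hm))

theorem Nat.pow_sub_le_pow {a d k : ℕ} (hk : k < d) : a ^ (d - k) ≤ a ^ d := by
  rcases Nat.eq_zero_or_pos a with rfl | ha
  · rw [zero_pow (Nat.sub_ne_zero_of_lt hk)]
    exact Nat.zero_le _
  · exact Nat.pow_le_pow_right ha (Nat.sub_le d k)

theorem Nat.pow_le_pow_mul_pow_sub (a d k : ℕ) : a ^ d ≤ a ^ d * a ^ (d - k) := by
  rcases Nat.eq_zero_or_pos a with rfl | ha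
  · rcases Nat.eq_zero_or_pos d with rfl | hd
    · simp
    · simp [zero_pow hd.ne']
  · exact Nat.le_mul_of_pos_right _ (Nat.pow_pos ha)

section Homogenization

variable {n : ℕ} (d : ℕ) (P : MvPolynomial (Fin n) ℕ) (a : ℕ) (Ξ : Fin n → ℕ)

theorem eval_eq_sum_eval_monomial :
    eval Ξ P = ∑ m ∈ P.support, eval Ξ (monomial m (P.coeff m)) := by
  conv_lhs => rw [← P.support_sum_monomial_coeff]
  rw [map_sum]

theorem eval_cons_homog :
    eval (Fin.cons a Ξ) (homog n d P) =
      ∑ m ∈ P.support, a ^ (d - m.sum fun _ e => e) * eval Ξ (monomial m (P.coeff m)) := by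
  rw [homog, map_sum]
  refine Finset.sum_congr rfl fun m _ => ?_
  rw [map_mul, map_pow, eval_X, eval_monomial, eval_monomial,
    Finsupp.prod_mapDomain_index_inj (Fin.succ_injective n)]
  simp only [Fin.cons_zero, Fin.cons_succ]

theorem eval_cons_one_homog : eval (Fin.cons 1 Ξ) (homog n d P) = eval Ξ P := by
  rw [eval_cons_homog, eval_eq_sum_eval_monomial]
  simp only [one_pow, one_mul]

theorem eval_cons_homog_le_pow_mul_eval (hd : ∀ m ∈ P.support, (m.sum fun _ e => e) < d) :
    eval (Fin.cons a Ξ) (homog n d P) ≤ a ^ d * eval Ξ P := by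
  rw [eval_cons_homog, eval_eq_sum_eval_monomial, Finset.mul_sum]
  exact Finset.sum_le_sum fun m hm => Nat.mul_le_mul_right _ (Nat.pow_sub_le_pow (hd m hm))

theorem pow_mul_eval_le_pow_mul_eval_cons_homog :
    a ^ d * eval Ξ P ≤ a ^ d * eval (Fin.cons a Ξ) (homog n d P) := by
  rw [eval_cons_homog, eval_eq_sum_eval_monomial, Finset.mul_sum, Finset.mul_sum]
  refine Finset.sum_le_sum fun m _ => ?_
  rw [← mul_assoc]
  exact Nat.mul_le_mul_right _ (Nat.pow_le_pow_mul_pow_sub a d _)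

end Homogenization

theorem stmt14_general (n d c : ℕ) (P₁ P₂ : MvPolynomial (Fin n) ℕ)
    (hd₁ : ∀ m ∈ P₁.support, (m.sum fun _ e => e) < d)
    (hc : ∀ m ∈ P₁.support, P₁.coeff m ≤ c) :
    (∃ Ξ : Fin n → ℕ, MvPolynomial.eval Ξ P₂ < MvPolynomial.eval Ξ P₁) ↔
    (∃ Ξ' : Fin (n + 1) → ℕ,
      (Ξ' 0) ^ d * MvPolynomial.eval Ξ' (C c * homog n d P₂) <
        c * MvPolynomial.eval Ξ' (homog n d P₁)) := by
  simp only [map_mul, eval_C]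
  constructor
  · rintro ⟨Ξ, hlt⟩
    have hP₁ : P₁ ≠ 0 := by
      rintro rfl
      simp at hlt
    refine ⟨Fin.cons 1 Ξ, ?_⟩
    simpa only [Fin.cons_zero, one_pow, one_mul, eval_cons_one_homog]
      using Nat.mul_lt_mul_of_pos_left hlt (pos_of_coeff_le hP₁ hc)
  · rintro ⟨Ξ', hlt⟩
    by_contra! hle
    induction Ξ' using Fin.consCases with
    | cons a Ξ =>
      rw [Fin.cons_zero] at hlt
      refine hlt.not_ge ?_
      calc c * eval (Fin.cons a Ξ) (homog n d P₁)
          ≤ c * (a ^ d * eval Ξ P₁) := 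
            Nat.mul_le_mul_left c (eval_cons_homog_le_pow_mul_eval d P₁ a Ξ hd₁)
        _ ≤ c * (a ^ d * eval Ξ P₂) := by gcongr; exact hle Ξ
        _ ≤ c * (a ^ d * eval (Fin.cons a Ξ) (homog n d P₂)) := 
            Nat.mul_le_mul_left c (pow_mul_eval_le_pow_mul_eval_cons_homog d P₂ a Ξ)
        _ = a ^ d * (c * eval (Fin.cons a Ξ) (homog n d P₂)) := by ring

/-- Let `P₁, P₂` be polynomials over `ℕ` in `ξ_2, …, ξ_{n+1}`, let `P₁'', P₂''` be
their homogenizations to common degree `d` via the fresh variable `ξ_1`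
(`d` exceeding the degree of every monomial), and let `c` be at least every
coefficient of `P₁`.  With `P_s = P₁''` and `P_b = c·P₂''`, the following are
equivalent: (a) some valuation `Ξ` satisfies `P₁(Ξ) > P₂(Ξ)`; (b) some valuation
`Ξ'` satisfies `c·P_s(Ξ') > Ξ'(ξ_1)^d · P_b(Ξ')`. -/
theorem stmt14 (n d c : ℕ) (P₁ P₂ : MvPolynomial (Fin n) ℕ)
    (hd₁ : ∀ m ∈ P₁.support, (m.sum fun _ e => e) < d)
    (hd₂ : ∀ m ∈ P₂.support, (m.sum fun _ e => e) < d)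
    (hc : ∀ m ∈ P₁.support, P₁.coeff m ≤ c) :
    (∃ Ξ : Fin n → ℕ, MvPolynomial.eval Ξ P₂ < MvPolynomial.eval Ξ P₁) ↔
    (∃ Ξ' : Fin (n + 1) → ℕ,
      (Ξ' 0) ^ d * MvPolynomial.eval Ξ' (C c * homog n d P₂) <
        c * MvPolynomial.eval Ξ' (homog n d P₁)) :=
  stmt14_general n d c P₁ P₂ hd₁ hc
end

section
/- Let n ≥ 3, and let X = {t, σ(t), σ²(t), ..., σ^{n−1}(t)} and Y = {s, σ(s), ..., σ^{n−1}(s)} be two distinct orbits of size exactly n under the cyclic shift σ of n-tuples. Drawing one tuple uniformly from X and one from Y independently, the probability that their first coordinates differ is at least 2n/(n+1)². -/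
/-!
Since both orbits have exactly `n` elements, `k ↦ σᵏ t` and `k ↦ σᵏ s` are injective on
`Fin n`, and the first coordinate of `σᵏ t` is `t k`. So it suffices to find `2(n - 1)` index
pairs `(i, j)` with `t i ≠ s j`, because `2n³ ≤ (n + 1)² · 2(n - 1)`. Neither tuple is constant.
Choosing `t i₁ ≠ t i₂`, every `j` gives a good pair in row `i₁` or row `i₂` (`n` pairs), and
every other row contains a good pair because `s` is not constant (`n - 2` more pairs).
-/

/-- Cyclic shift of an `n`-tuple (the generator of the action of `ℤ/nℤ`). -/
def shift {S : Type*} {n : ℕ} (t : Fin n → S) : Fin n → S :=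
  fun i => t ⟨(i.val + 1) % n, Nat.mod_lt _ (by have := i.isLt; omega)⟩

/-- The orbit of an `n`-tuple under the action of `ℤ/nℤ` by cyclic shifts. -/
def shiftOrbit {S : Type*} {n : ℕ} (t : Fin n → S) : Set (Fin n → S) :=
  {u | ∃ k : ℕ, u = shift^[k] t}

open Finset

lemma two_mul_card_sub_one_le_ncard_ne {ι S : Type*} [Fintype ι] {t s : ι → S}
    (ht : ∃ i j, t i ≠ t j) (hs : ∃ i j, s i ≠ s j) :
    2 * (Fintype.card ι - 1) ≤ {p : ι × ι | t p.1 ≠ s p.2}.ncard := by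
  classical
  obtain ⟨i₁, i₂, hti⟩ := ht
  obtain ⟨j₁, j₂, hsj⟩ := hs
  set row : ι → ℕ := fun i => #{j | t i ≠ s j}
  have hrow_pos : ∀ i, 1 ≤ row i := fun i => card_pos.mpr <| by
    by_cases h : t i = s j₁
    · exact ⟨j₂, by simpa [h] using hsj⟩
    · exact ⟨j₁, by simpa using h⟩
  have hrow_pair : Fintype.card ι ≤ row i₁ + row i₂ :=
    calc Fintype.card ι = #(({j | t i₁ ≠ s j} : Finset ι) ∪ ({j | t i₂ ≠ s j} : Finset ι)) := by
          rw [← card_univ]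
          congr 1
          ext j
          simp only [mem_univ, mem_union, mem_filter, true_and, true_iff]
          by_contra! h
          exact hti (h.1.trans h.2.symm)
      _ ≤ row i₁ + row i₂ := card_union_le _ _
  have hcount : {p : ι × ι | t p.1 ≠ s p.2}.ncard = ∑ i, row i := by
    rw [Set.ncard_eq_toFinset_card', Set.toFinset_ofPred, card_filter, Fintype.sum_prod_type]
    simp only [row, card_filter]
  have hi : i₁ ≠ i₂ := fun h => hti (h ▸ rfl)
  have hrest : Fintype.card ι - 2 ≤ ∑ i ∈ univ \ {i₁, i₂}, row i := by
    simpa [card_univ_sdiff, card_pair hi] using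
      card_nsmul_le_sum (univ \ {i₁, i₂}) row 1 fun i _ => hrow_pos i
  rw [hcount, ← sum_sdiff (subset_univ {i₁, i₂}), sum_pair hi]
  omega

section Shift

variable {S : Type*} {n : ℕ}

lemma shift_iterate_apply (t : Fin n → S) (k : ℕ) (i : Fin n) :
    shift^[k] t i = t ⟨(i + k) % n, Nat.mod_lt _ i.pos⟩ := by
  induction k generalizing t with
  | zero => simp [Nat.mod_eq_of_lt i.isLt]
  | succ k ih =>
    rw [Function.iterate_succ_apply, ih]
    simp only [shift, Nat.mod_add_mod, Nat.add_assoc]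

lemma isPeriodicPt_shift (t : Fin n → S) : Function.IsPeriodicPt shift n t := by
  funext i
  simp [shift_iterate_apply, Nat.mod_eq_of_lt i.isLt]

lemma shift_iterate_apply_zero (t : Fin n → S) (k : Fin n) :
    shift^[k] t ⟨0, k.pos⟩ = t k := by
  simp [shift_iterate_apply, Nat.mod_eq_of_lt k.isLt]

lemma shiftOrbit_eq_range (hn : 0 < n) (t : Fin n → S) :
    shiftOrbit t = Set.range fun k : Fin n => shift^[k] t := by
  ext u
  constructor
  · rintro ⟨k, rfl⟩
    exact ⟨⟨k % n, Nat.mod_lt _ hn⟩, (isPeriodicPt_shift t).iterate_mod_apply k⟩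
  · rintro ⟨k, rfl⟩
    exact ⟨k, rfl⟩

lemma injective_shift_iterate_of_ncard_shiftOrbit (hn : 0 < n) {t : Fin n → S}
    (h : (shiftOrbit t).ncard = n) : Function.Injective fun k : Fin n => shift^[k] t := by
  rw [shiftOrbit_eq_range hn, ← Set.image_univ] at h
  exact Set.injOn_univ.mp (Set.injOn_of_ncard_image_eq (by simpa using h))

lemma exists_ne_of_ncard_shiftOrbit {t : Fin n → S} (hn : 2 ≤ n)
    (h : (shiftOrbit t).ncard = n) : ∃ i j, t i ≠ t j := by
  by_contra! hconst
  have : shift^[(⟨1, hn⟩ : Fin n)] t = shift^[(⟨0, by omega⟩ : Fin n)] t :=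
    funext fun i => hconst _ _
  simpa using injective_shift_iterate_of_ncard_shiftOrbit (by omega) h this

end Shift

/-- Let `n ≥ 3` and let `X`, `Y` be two distinct orbits of `n`-tuples under the
cyclic shift, both of full size exactly `n` (normal cyclasses).  Drawing one tuple
uniformly from `X` and one from `Y` independently, the probability that their first
coordinates differ is at least `2n/(n+1)²`; combinatorially:
`2n·|X|·|Y| ≤ (n+1)²·|{(u,v) ∈ X×Y : u 0 ≠ v 0}|`. -/
theorem stmt17 {S : Type*} (n : ℕ) (hn : 3 ≤ n) (t s : Fin n → S)
    (hX : (shiftOrbit t).ncard = n) (hY : (shiftOrbit s).ncard = n) :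
    2 * n * ((shiftOrbit t).ncard * (shiftOrbit s).ncard) ≤
      (n + 1) ^ 2 * {p : (Fin n → S) × (Fin n → S) |
            p.1 ∈ shiftOrbit t ∧ p.2 ∈ shiftOrbit s ∧
              p.1 ⟨0, by omega⟩ ≠ p.2 ⟨0, by omega⟩}.ncard := by
  have hrows : 2 * (n - 1) ≤ {p : Fin n × Fin n | t p.1 ≠ s p.2}.ncard := by
    simpa using two_mul_card_sub_one_le_ncard_ne (exists_ne_of_ncard_shiftOrbit (by omega) hX)
      (exists_ne_of_ncard_shiftOrbit (by omega) hY)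
  have hembed : {p : Fin n × Fin n | t p.1 ≠ s p.2}.ncard ≤ {p : (Fin n → S) × (Fin n → S) |
      p.1 ∈ shiftOrbit t ∧ p.2 ∈ shiftOrbit s ∧ p.1 ⟨0, by omega⟩ ≠ p.2 ⟨0, by omega⟩}.ncard := by
    refine Set.ncard_le_ncard_of_injOn (fun p => (shift^[p.1] t, shift^[p.2] s))
      (fun p hp => ⟨⟨p.1, rfl⟩, ⟨p.2, rfl⟩, ?_⟩) ?_ ?_
    · simpa only [shift_iterate_apply_zero, Set.mem_ofPred_eq] using hp
    · exact ((injective_shift_iterate_of_ncard_shiftOrbit (by omega) hX).prodMap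
        (injective_shift_iterate_of_ncard_shiftOrbit (by omega) hY)).injOn
    · exact ((Set.finite_of_ncard_ne_zero (by omega)).prod
        (Set.finite_of_ncard_ne_zero (by omega))).subset fun p hp => ⟨hp.1, hp.2.1⟩
  rw [hX, hY]
  obtain ⟨m, rfl⟩ : ∃ m, n = m + 1 := ⟨n - 1, by omega⟩
  calc 2 * (m + 1) * ((m + 1) * (m + 1)) ≤ (m + 1 + 1) ^ 2 * (2 * m) := by nlinarith
    _ ≤ _ := Nat.mul_le_mul_left _ (by simpa using hrows.trans hembed)
end
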